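/- Let g : (0,1) → ℝ be nondecreasing and càdlàg, and let h : (0,1) → ℝ be nondecreasing and square-integrable. Then the orthogonal projection pr_g h of h onto the subspace of σ(g)-measurable square-integrable functions has a nondecreasing modification. -/

import Mathlib

/-!
On a fibre `g⁻¹{c}` of positive measure, which is an atom of `σ(g)`, the conditional expectation
is the average of `h` over the fibre. There are only countably many such fibres, so their
complement is `σ(g)`-measurable; a monotone `g` is injective on it inside `(0,1)`, whence `h`
restricted to it is `σ(g)`-measurable and the conditional expectation is `h` there. The resulting
function is monotone because on each fibre of positive measure the average of `h` lies between the
values of `h` to the left and to the right of the fibre.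
-/

open MeasureTheory Set

noncomputable section

/-- Lebesgue measure restricted to `(0,1)`. -/
def mu01 : Measure ℝ := volume.restrict (Set.Ioo (0:ℝ) 1)

instance : IsFiniteMeasure mu01 := Real.isFiniteMeasure_restrict_Ioo 0 1

section Average

variable {α : Type*} [MeasurableSpace α] {μ : Measure α} [IsFiniteMeasure μ] {s : Set α}
  {f : α → ℝ} {c : ℝ}

theorem setAverage_le_of_ae_le (hs : μ s ≠ 0) (hf : IntegrableOn f s μ)
    (hfc : ∀ᵐ x ∂μ.restrict s, f x ≤ c) : ⨍ x in s, f x ∂μ ≤ c := by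
  obtain ⟨x, hx, hle⟩ := exists_notMem_null_average_le (N := {x | c < f x})
    (Measure.restrict_eq_zero.not.mpr hs) hf (by simpa [ae_iff] using hfc)
  exact hle.trans (not_lt.mp hx)

theorem le_setAverage_of_ae_le (hs : μ s ≠ 0) (hf : IntegrableOn f s μ)
    (hcf : ∀ᵐ x ∂μ.restrict s, c ≤ f x) : c ≤ ⨍ x in s, f x ∂μ := by
  obtain ⟨x, hx, hle⟩ := exists_notMem_null_le_average (N := {x | f x < c})
    (Measure.restrict_eq_zero.not.mpr hs) hf (by simpa [ae_iff] using hcf)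
  exact (not_lt.mp hx).trans hle

end Average

def fiberAverage {α β : Type*} [MeasurableSpace α] (μ : Measure α) (g : α → β) (h : α → ℝ)
    (x : α) : ℝ :=
  if μ (g ⁻¹' {g x}) = 0 then h x else ⨍ y in g ⁻¹' {g x}, h y ∂μ

theorem ae_condExp_eq_of_mem_of_aestronglyMeasurable_indicator {α : Type*}
    {m m₀ : MeasurableSpace α} {μ : Measure α} (hm : m ≤ m₀) [SigmaFinite (μ.trim hm)]
    {f : α → ℝ} (hf : Integrable f μ)
    {s : Set α} (hs : MeasurableSet[m] s) (hfs : AEStronglyMeasurable[m] (s.indicator f) μ) :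
    ∀ᵐ x ∂μ, x ∈ s → μ[f | m] x = f x := by
  filter_upwards [condExp_indicator hf hs, condExp_of_aestronglyMeasurable' hm hfs
    (hf.indicator (hm s hs))] with x hx hx' hxs
  simpa [indicator_of_mem hxs] using hx.symm.trans hx'

section CondExp

variable {α β : Type*} [MeasurableSpace α] [mβ : MeasurableSpace β] {μ : Measure α}
  {g : α → β} {h : α → ℝ}

theorem condExp_comap_eq_setAverage [IsFiniteMeasure μ] [MeasurableSingletonClass β]
    (hg : Measurable g) (hh : Integrable h μ) {x : α} (hx : μ (g ⁻¹' {g x}) ≠ 0) :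
    μ[h | mβ.comap g] x = ⨍ y in g ⁻¹' {g x}, h y ∂μ := by
  have hT : MeasurableSet[mβ.comap g] (g ⁻¹' {g x}) := ⟨{g x}, measurableSet_singleton _, rfl⟩
  have hconst : ∀ y ∈ g ⁻¹' {g x}, μ[h | mβ.comap g] y = μ[h | mβ.comap g] x :=
    fun y hy => stronglyMeasurable_condExp.factorsThrough hy
  calc μ[h | mβ.comap g] x = ⨍ y in g ⁻¹' {g x}, μ[h | mβ.comap g] y ∂μ := by
        rw [setAverage_congr_fun (hg.comap_le _ hT) (ae_of_all _ hconst),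
          setAverage_const hx (measure_ne_top _ _)]
    _ = ⨍ y in g ⁻¹' {g x}, h y ∂μ := by
        rw [setAverage_eq, setAverage_eq, setIntegral_condExp hg.comap_le hh hT]

theorem aestronglyMeasurable_comap_indicator_preimage [StandardBorelSpace α]
    [MeasurableSpace.CountablySeparated β] (hg : Measurable g) (hh : AEStronglyMeasurable h μ)
    {N : Set α} (hN : MeasurableSet N) (hNae : ∀ᵐ x ∂μ, x ∈ N) {E : Set β}
    (hE : MeasurableSet E) (hinj : InjOn g (N ∩ g ⁻¹' E)) :
    AEStronglyMeasurable[mβ.comap g] ((g ⁻¹' E).indicator h) μ := by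
  have hM : MeasurableSet (N ∩ g ⁻¹' E) := hN.inter (hg hE)
  have := hM.standardBorel
  have hemb : MeasurableEmbedding fun x : ↥(N ∩ g ⁻¹' E) => g x :=
    (hg.comp measurable_subtype_coe).measurableEmbedding
      fun x y hxy => Subtype.ext (hinj x.2 y.2 hxy)
  obtain ⟨ψ, hψ, hψg⟩ := hemb.exists_measurable_extend
    (hh.stronglyMeasurable_mk.measurable.comp measurable_subtype_coe) fun _ => ⟨0⟩
  refine ⟨E.indicator ψ ∘ g,
    ((hψ.indicator hE).comp (comap_measurable g)).stronglyMeasurable, ?_⟩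
  filter_upwards [hNae, hh.ae_eq_mk] with x hxN hx
  by_cases hxE : g x ∈ E
  · simp only [Function.comp_apply, indicator_of_mem hxE,
      indicator_of_mem (show x ∈ g ⁻¹' E from hxE), hx]
    exact (congrFun hψg ⟨x, hxN, hxE⟩).symm
  · simp [indicator_of_notMem hxE, indicator_of_notMem (show x ∉ g ⁻¹' E from hxE)]

theorem condExp_comap_ae_eq_fiberAverage [StandardBorelSpace α]
    [MeasurableSpace.CountablySeparated β] [MeasurableSingletonClass β] [IsFiniteMeasure μ]
    (hg : Measurable g) (hh : Integrable h μ) {N : Set α} (hN : MeasurableSet N)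
    (hNae : ∀ᵐ x ∂μ, x ∈ N) (hinj : InjOn g (N ∩ {x | μ (g ⁻¹' {g x}) = 0})) :
    μ[h | mβ.comap g] =ᵐ[μ] fiberAverage μ g h := by
  set E : Set β := {c | μ (g ⁻¹' {c}) = 0}
  have hE : MeasurableSet E := by
    have hcount : Eᶜ.Countable := (Measure.countable_meas_level_set_pos (μ := μ) hg).mono
      fun _ hc => pos_iff_ne_zero.mpr hc
    simpa using hcount.measurableSet.compl
  have hnull := ae_condExp_eq_of_mem_of_aestronglyMeasurable_indicator hg.comap_le hh
    ⟨E, hE, rfl⟩ (aestronglyMeasurable_comap_indicator_preimage hg hh.1 hN hNae hE hinj)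
  filter_upwards [hnull] with x hx
  by_cases h0 : μ (g ⁻¹' {g x}) = 0
  · rw [fiberAverage, if_pos h0]
    exact hx h0
  · rw [fiberAverage, if_neg h0]
    exact condExp_comap_eq_setAverage hg hh h0

end CondExp

section Monotone

variable {s : Set ℝ} {g h : ℝ → ℝ}

theorem volume_restrict_preimage_singleton_ne_zero (hs : s.OrdConnected) (hg : MonotoneOn g s)
    {a b : ℝ} (ha : a ∈ s) (hb : b ∈ s) (hab : a < b) (hgab : g a = g b) :
    volume.restrict s (g ⁻¹' {g a}) ≠ 0 := by
  have hsub : Icc a b ⊆ g ⁻¹' {g a} ∩ s := fun x hx =>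
    have hxs := hs.out ha hb hx
    ⟨le_antisymm ((hg hxs hb hx.2).trans hgab.ge) (hg ha hxs hx.1), hxs⟩
  refine ne_of_gt (lt_of_lt_of_le ?_ ((measure_mono hsub).trans (Measure.le_restrict_apply _ _)))
  simpa [Real.volume_Icc] using hab

theorem injOn_setOf_volume_restrict_preimage_singleton_eq_zero (hs : s.OrdConnected)
    (hg : MonotoneOn g s) : InjOn g (s ∩ {x | volume.restrict s (g ⁻¹' {g x}) = 0}) := by
  intro a ha b hb hab
  by_contra hne
  rcases lt_or_gt_of_ne hne with hlt | hlt
  · exact volume_restrict_preimage_singleton_ne_zero hs hg ha.1 hb.1 hlt hab ha.2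
  · exact volume_restrict_preimage_singleton_ne_zero hs hg hb.1 ha.1 hlt hab.symm hb.2

variable [IsFiniteMeasure (volume.restrict s)]

theorem fiberAverage_le_of_lt (hs : s.OrdConnected) (hg : MonotoneOn g s) (hgm : Measurable g)
    (hh : MonotoneOn h s) (hhi : IntegrableOn h s) {u b : ℝ} (hu : u ∈ s) (hb : b ∈ s)
    (hub : g u < g b) : fiberAverage (volume.restrict s) g h u ≤ h b := by
  have hle : ∀ {x}, x ∈ s → g x < g b → h x ≤ h b := fun hx hxb =>
    hh hx hb (hg.reflect_lt hx hb hxb).le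
  unfold fiberAverage
  split_ifs with h0
  · exact hle hu hub
  · refine setAverage_le_of_ae_le h0 (Integrable.integrableOn hhi) ?_
    filter_upwards [ae_restrict_mem (hgm (measurableSet_singleton (g u))),
      ae_restrict_of_ae (ae_restrict_mem hs.measurableSet)] with x hxT hxs
    exact hle hxs (by rwa [show g x = g u from hxT])

theorem monotoneOn_fiberAverage (hs : s.OrdConnected) (hg : MonotoneOn g s) (hgm : Measurable g)
    (hh : MonotoneOn h s) (hhi : IntegrableOn h s) :
    MonotoneOn (fiberAverage (volume.restrict s) g h) s := by
  intro u hu v hv huv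
  rcases (hg hu hv huv).eq_or_lt with hguv | hguv
  · by_cases h0 : volume.restrict s (g ⁻¹' {g v}) = 0
    · have hu0 : volume.restrict s (g ⁻¹' {g u}) = 0 := by rwa [hguv]
      rw [injOn_setOf_volume_restrict_preimage_singleton_eq_zero hs hg ⟨hu, hu0⟩ ⟨hv, h0⟩ hguv]
    · simp only [fiberAverage, hguv, if_neg h0, le_refl]
  by_cases h0 : volume.restrict s (g ⁻¹' {g v}) = 0
  · rw [show fiberAverage _ g h v = h v from if_pos h0]
    exact fiberAverage_le_of_lt hs hg hgm hh hhi hu hv hguv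
  · rw [show fiberAverage _ g h v = _ from if_neg h0]
    refine le_setAverage_of_ae_le h0 (Integrable.integrableOn hhi) ?_
    filter_upwards [ae_restrict_mem (hgm (measurableSet_singleton (g v))),
      ae_restrict_of_ae (ae_restrict_mem hs.measurableSet)] with x hxT hxs
    exact fiberAverage_le_of_lt hs hg hgm hh hhi hu hxs (by rwa [show g x = g v from hxT])

end Monotone

theorem stmt2_general (g h : ℝ → ℝ) (hgmono : MonotoneOn g (Set.Ioo (0:ℝ) 1))
    (hgmeas : Measurable g)
    (hhmono : MonotoneOn h (Set.Ioo (0:ℝ) 1))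
    (hh : MemLp h 2 mu01) :
    ∃ f : ℝ → ℝ, MonotoneOn f (Set.Ioo (0:ℝ) 1) ∧
      mu01[h | MeasurableSpace.comap g (borel ℝ)] =ᵐ[mu01] f := by
  have hint : Integrable h mu01 := hh.integrable one_le_two
  exact ⟨fiberAverage mu01 g h,
    monotoneOn_fiberAverage ordConnected_Ioo hgmono hgmeas hhmono hint,
    condExp_comap_ae_eq_fiberAverage hgmeas hint measurableSet_Ioo
    (ae_restrict_mem measurableSet_Ioo)
    (injOn_setOf_volume_restrict_preimage_singleton_eq_zero ordConnected_Ioo hgmono)⟩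

/-- if `g` is nondecreasing and càdlàg on `(0,1)` and `h` is a
nondecreasing square-integrable function, then the orthogonal projection
`pr_g h = E(h | σ(g))` of `h` onto the σ(g)-measurable square-integrable functions
has a nondecreasing modification. -/
theorem stmt2 (g h : ℝ → ℝ) (hgmono : MonotoneOn g (Set.Ioo (0:ℝ) 1))
    (hgr : ∀ u ∈ Set.Ioo (0:ℝ) 1, ContinuousWithinAt g (Set.Ici u) u)
    (hgmeas : Measurable g)
    (hhmono : MonotoneOn h (Set.Ioo (0:ℝ) 1))
    (hh : MemLp h 2 mu01) :
    ∃ f : ℝ → ℝ, MonotoneOn f (Set.Ioo (0:ℝ) 1) ∧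
      mu01[h | MeasurableSpace.comap g (borel ℝ)] =ᵐ[mu01] f :=
  stmt2_general g h hgmono hgmeas hhmono hh
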